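/- arXiv:1105.0730 — 6 statements merged into one kernel-verified Lean document; each statement's English description precedes it below -/
import Mathlib

section
/- For nonnegative integers r₁, r₂, r₃, r₄, r₅, the integral over the unit 5-cube [0,1]⁵ of x₁^{r₁} x₂^{r₂} x₃^{r₃} x₄^{r₄} x₅^{r₅} / (1 - x₁x₂x₃x₄x₅) equals the sum over k ≥ 0 of 1/((k+r₁+1)(k+r₂+1)(k+r₃+1)(k+r₄+1)(k+r₅+1)). -/
/-!
Off the null set where some coordinate equals `1`, the product `t = ∏ xᵢ` lies in `[0, 1)`, so
`1 / (1 - t) = ∑ₖ tᵏ` and the integrand is the series of monomials `∏ xᵢ ^ (rᵢ + k)`. Each monomial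
integrates over the cube to `∏ 1 / (k + rᵢ + 1)` by Fubini; these integrals are summable as soon as
there are at least two variables, which justifies integrating the series term by term.
-/

open MeasureTheory Set

section Cube

variable {ι : Type*} [Fintype ι]

theorem setIntegral_cube_prod_pow (n : ι → ℕ) :
    ∫ x in univ.pi fun _ : ι => Icc (0 : ℝ) 1, ∏ i, x i ^ n i = ∏ i, ((n i : ℝ) + 1)⁻¹ := by
  rw [volume_pi, Measure.restrict_pi_pi, integral_fintype_prod_eq_prod (fun i t => t ^ n i)]
  refine Finset.prod_congr rfl fun i _ => ?_
  rw [integral_Icc_eq_integral_Ioc, ← intervalIntegral.integral_of_le zero_le_one, integral_pow]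
  simp

theorem ae_cube_mem_Ico : ∀ᵐ x ∂volume.restrict (univ.pi fun _ : ι => Icc (0 : ℝ) 1),
    ∀ i, x i ∈ Ico (0 : ℝ) 1 := by
  rw [volume_pi, ← Measure.restrict_congr_set Measure.pi_Ico_ae_eq_pi_Icc]
  exact (ae_restrict_mem (.univ_pi fun _ => measurableSet_Ico)).mono fun x hx i => hx i (mem_univ i)

theorem prod_lt_one_of_mem_Ico [Nonempty ι] {x : ι → ℝ} (hx : ∀ i, x i ∈ Ico (0 : ℝ) 1) :
    ∏ i, x i < 1 := by
  obtain ⟨i₀⟩ := ‹Nonempty ι›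
  calc ∏ i, x i ≤ ∏ i ∈ {i₀}, x i :=
        Finset.prod_le_prod_of_subset_of_le_one (Finset.subset_univ _)
          (fun i _ => (hx i).1) fun i _ _ => (hx i).2.le
    _ = x i₀ := Finset.prod_singleton _ _
    _ < 1 := (hx i₀).2

theorem prod_pow_div_one_sub_prod_eq_tsum [Nonempty ι] {x : ι → ℝ}
    (hx : ∀ i, x i ∈ Ico (0 : ℝ) 1) (r : ι → ℕ) :
    (∏ i, x i ^ r i) / (1 - ∏ i, x i) = ∑' k : ℕ, ∏ i, x i ^ (r i + k) := by
  have h0 : 0 ≤ ∏ i, x i := Finset.prod_nonneg fun i _ => (hx i).1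
  rw [div_eq_mul_inv, ← tsum_geometric_of_lt_one h0 (prod_lt_one_of_mem_Ico hx), ← tsum_mul_left]
  simp only [pow_add, Finset.prod_mul_distrib, Finset.prod_pow]

theorem summable_one_div_prod_add (hι : 1 < Fintype.card ι) (a : ι → ℝ) (ha : ∀ i, 0 ≤ a i) :
    Summable fun k : ℕ => 1 / ∏ i, ((k : ℝ) + a i + 1) := by
  have hp : Summable fun k : ℕ => 1 / ((k : ℝ) + 1) ^ Fintype.card ι := by
    simpa using (summable_nat_add_iff 1).mpr (Real.summable_one_div_nat_pow.mpr hι)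
  have hpos (k : ℕ) (i : ι) : 0 < (k : ℝ) + a i + 1 := by positivity [ha i]
  refine hp.of_nonneg_of_le (fun k => ?_) fun k => ?_
  · exact div_nonneg zero_le_one (Finset.prod_nonneg fun i _ => (hpos k i).le)
  · gcongr
    calc ((k : ℝ) + 1) ^ Fintype.card ι = ∏ _i : ι, ((k : ℝ) + 1) := by simp
      _ ≤ ∏ i, ((k : ℝ) + a i + 1) :=
        Finset.prod_le_prod (fun _ _ => by positivity) fun i _ => by linarith [ha i]

theorem setIntegral_cube_prod_pow_div_one_sub_prod (hι : 1 < Fintype.card ι) (r : ι → ℕ) :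
    ∫ x in univ.pi fun _ : ι => Icc (0 : ℝ) 1, (∏ i, x i ^ r i) / (1 - ∏ i, x i) =
      ∑' k : ℕ, 1 / ∏ i, ((k : ℝ) + r i + 1) := by
  have : Nonempty ι := Fintype.card_pos_iff.mp (by omega)
  set C := univ.pi fun _ : ι => Icc (0 : ℝ) 1
  set f : ℕ → (ι → ℝ) → ℝ := fun k x => ∏ i, x i ^ (r i + k)
  have hf_integral (k : ℕ) : ∫ x in C, f k x = 1 / ∏ i, ((k : ℝ) + r i + 1) := by
    rw [setIntegral_cube_prod_pow, one_div, ← Finset.prod_inv_distrib]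
    push_cast
    simp only [add_comm (r _ : ℝ)]
  have hf_integrableOn (k : ℕ) : IntegrableOn (f k) C :=
    (by fun_prop : Continuous (f k)).continuousOn.integrableOn_compact
      (isCompact_univ_pi fun _ => isCompact_Icc)
  have hf_integral_norm (k : ℕ) : ∫ x in C, ‖f k x‖ = ∫ x in C, f k x :=
    setIntegral_congr_fun (.univ_pi fun _ => measurableSet_Icc) fun x hx =>
      Real.norm_of_nonneg (Finset.prod_nonneg fun i _ => pow_nonneg (hx i (mem_univ i)).1 _)
  calc ∫ x in C, (∏ i, x i ^ r i) / (1 - ∏ i, x i)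
      = ∫ x in C, ∑' k, f k x :=
        integral_congr_ae (ae_cube_mem_Ico.mono fun x hx => prod_pow_div_one_sub_prod_eq_tsum hx r)
    _ = ∑' k, ∫ x in C, f k x := by
        refine (integral_tsum_of_summable_integral_norm hf_integrableOn ?_).symm
        simpa only [hf_integral_norm, hf_integral] using
          summable_one_div_prod_add hι _ fun i => (r i).cast_nonneg
    _ = ∑' k : ℕ, 1 / ∏ i, ((k : ℝ) + r i + 1) := tsum_congr hf_integral

end Cube

theorem integral_eq_tsum (r : Fin 5 → ℕ) :
    (∫ x in (Set.univ.pi fun _ : Fin 5 => Set.Icc (0:ℝ) 1),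
        (∏ i, x i ^ r i) / (1 - ∏ i, x i)) =
      ∑' k : ℕ, 1 / ∏ i, ((k : ℝ) + r i + 1) :=
  setIntegral_cube_prod_pow_div_one_sub_prod (by simp) r
end

section
/- If r₁ = r₂ = r₃ = r₄ = r > r₅ = s ≥ 0 are nonnegative integers, then ∑_{k≥0} 1/((k+r+1)⁴(k+s+1)) = (1/(r-s)⁴)·∑_{j=s+1}^{r} 1/j - (1/(r-s)³)·(ζ(2) - ∑_{j=1}^{r} 1/j²) - (1/(r-s)²)·(ζ(3) - ∑_{j=1}^{r} 1/j³) - (1/(r-s))·(ζ(4) - ∑_{j=1}^{r} 1/j⁴). -/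
/-!
With `a = k + r + 1` and `b = k + s + 1`, so that `a - b = r - s`, the partial fraction
decomposition of `1 / (a ^ 4 * b)` splits each term into `(1 / b - 1 / a) / (r - s) ^ 4` and
multiples of `1 / a ^ 2`, `1 / a ^ 3`, `1 / a ^ 4`. The first part telescopes to the finite
harmonic sum over `(s, r]`; the others sum to the tails of `ζ(2)`, `ζ(3)`, `ζ(4)` after `r` terms.
-/

open Filter Finset Topology

theorem hasSum_sub_of_antitone {f : ℕ → ℝ} (hf : Antitone f) (hf0 : Tendsto f atTop (𝓝 0))
    {s r : ℕ} (hsr : s ≤ r) :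
    HasSum (fun k ↦ f (k + s) - f (k + r)) (∑ i ∈ Ico s r, f i) := by
  have hnonneg (k : ℕ) : 0 ≤ f (k + s) - f (k + r) := sub_nonneg.2 (hf (by omega))
  have hpartial (N : ℕ) :
      ∑ k ∈ range N, (f (k + s) - f (k + r)) = ∑ i ∈ Ico s r, (f i - f (N + i)) := by
    have hstep (k : ℕ) : f (k + s) - f (k + r) = ∑ i ∈ Ico s r, (f (k + i) - f (k + (i + 1))) := by
      rw [← neg_sub, ← sum_Ico_sub (fun i ↦ f (k + i)) hsr, ← sum_neg_distrib]
      simp only [neg_sub, add_comm k]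
    simp_rw [hstep]
    rw [sum_comm]
    refine sum_congr rfl fun i _ ↦ ?_
    simpa [add_assoc, add_comm, add_left_comm] using sum_range_sub' (fun k ↦ f (k + i)) N
  rw [hasSum_iff_tendsto_nat_of_nonneg hnonneg, funext hpartial]
  simpa using tendsto_finsetSum (Ico s r) fun i _ ↦
    (tendsto_const_nhds (x := f i)).sub (hf0.comp (tendsto_add_atTop_nat i))

theorem sum_Ico_one_div_add_one_pow (s r m : ℕ) :
    ∑ i ∈ Ico s r, 1 / ((i : ℝ) + 1) ^ m = ∑ j ∈ Icc (s + 1) r, 1 / (j : ℝ) ^ m := by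
  rw [← Ico_add_one_right_eq_Icc, ← sum_Ico_add' (fun j : ℕ ↦ 1 / (j : ℝ) ^ m)]
  push_cast
  rfl

theorem hasSum_one_div_add_sub_one_div_add {s r : ℕ} (hsr : s ≤ r) :
    HasSum (fun k : ℕ ↦ 1 / ((k : ℝ) + s + 1) - 1 / ((k : ℝ) + r + 1))
      (∑ j ∈ Icc (s + 1) r, 1 / (j : ℝ)) := by
  have hf : Antitone fun n : ℕ ↦ 1 / ((n : ℝ) + 1) := fun _ _ hab ↦ by
    dsimp only
    gcongr
  have hharmonic := sum_Ico_one_div_add_one_pow s r 1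
  simp only [pow_one] at hharmonic
  rw [← hharmonic]
  simpa only [Nat.cast_add] using
    hasSum_sub_of_antitone hf tendsto_one_div_add_atTop_nhds_zero_nat hsr

theorem hasSum_one_div_add_pow (r : ℕ) {m : ℕ} (hm : 1 < m) :
    HasSum (fun k : ℕ ↦ 1 / ((k : ℝ) + r + 1) ^ m)
      ((∑' n : ℕ, 1 / ((n : ℝ) + 1) ^ m) - ∑ j ∈ Icc 1 r, 1 / (j : ℝ) ^ m) := by
  have hsum : Summable fun n : ℕ ↦ 1 / ((n : ℝ) + 1) ^ m := by
    simpa using (summable_nat_add_iff 1).2 (Real.summable_one_div_nat_pow.2 hm)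
  have htail := (hasSum_nat_add_iff' r).2 hsum.hasSum
  rw [range_eq_Ico, sum_Ico_one_div_add_one_pow, zero_add] at htail
  simpa only [Nat.cast_add] using htail

theorem one_div_pow_four_mul {K : Type*} [Field K] {a b : K} (ha : a ≠ 0) (hb : b ≠ 0)
    (hab : a - b ≠ 0) :
    1 / (a ^ 4 * b) = 1 / (a - b) ^ 4 * (1 / b - 1 / a) - 1 / (a - b) ^ 3 * (1 / a ^ 2)
      - 1 / (a - b) ^ 2 * (1 / a ^ 3) - 1 / (a - b) * (1 / a ^ 4) := by
  field_simp

theorem tsum_four_one (r s : ℕ) (h : s < r) :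
    (∑' k : ℕ, 1 / (((k : ℝ) + r + 1) ^ 4 * ((k : ℝ) + s + 1))) =
      (1 / ((r : ℝ) - s) ^ 4) * (∑ j ∈ Finset.Icc (s + 1) r, 1 / (j : ℝ))
      - (1 / ((r : ℝ) - s) ^ 3) *
          ((∑' n : ℕ, 1 / ((n : ℝ) + 1) ^ 2) - ∑ j ∈ Finset.Icc 1 r, 1 / (j : ℝ) ^ 2)
      - (1 / ((r : ℝ) - s) ^ 2) *
          ((∑' n : ℕ, 1 / ((n : ℝ) + 1) ^ 3) - ∑ j ∈ Finset.Icc 1 r, 1 / (j : ℝ) ^ 3)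
      - (1 / ((r : ℝ) - s)) *
          ((∑' n : ℕ, 1 / ((n : ℝ) + 1) ^ 4) - ∑ j ∈ Finset.Icc 1 r, 1 / (j : ℝ) ^ 4) := by
  have hrs : (r : ℝ) - s ≠ 0 := sub_ne_zero.2 (by exact_mod_cast h.ne')
  have hterm (k : ℕ) : 1 / (((k : ℝ) + r + 1) ^ 4 * ((k : ℝ) + s + 1)) =
      1 / ((r : ℝ) - s) ^ 4 * (1 / ((k : ℝ) + s + 1) - 1 / ((k : ℝ) + r + 1))
        - 1 / ((r : ℝ) - s) ^ 3 * (1 / ((k : ℝ) + r + 1) ^ 2)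
        - 1 / ((r : ℝ) - s) ^ 2 * (1 / ((k : ℝ) + r + 1) ^ 3)
        - 1 / ((r : ℝ) - s) * (1 / ((k : ℝ) + r + 1) ^ 4) := by
    have hdiff : (k : ℝ) + r + 1 - ((k : ℝ) + s + 1) = r - s := by ring
    rw [one_div_pow_four_mul (by positivity) (by positivity) (hdiff ▸ hrs), hdiff]
  simp_rw [hterm]
  exact ((((hasSum_one_div_add_sub_one_div_add h.le).mul_left _).sub
    ((hasSum_one_div_add_pow r (by norm_num : 1 < 2)).mul_left _)).sub
    ((hasSum_one_div_add_pow r (by norm_num : 1 < 3)).mul_left _)).sub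
    ((hasSum_one_div_add_pow r (by norm_num : 1 < 4)).mul_left _) |>.tsum_eq
end

section
/- If r₁ > r₂ > r₃ > r₄ > r₅ ≥ 0 are nonnegative integers, then ∑_{k≥0} 1/∏_{i=1}^{5}(k+r_i+1) is a rational number whose denominator divides lcm(1,2,…,r₁)⁵. -/
open Finset Polynomial Filter

lemma aux_basis_eq {F : Type*} [Field F] (v : Fin 5 → F) (i : Fin 5) :
    Lagrange.basis univ v i
      = C (∏ j ∈ univ.erase i, (v i - v j)⁻¹) * ∏ j ∈ univ.erase i, (X - C (v j)) := by
  rw [Lagrange.basis]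
  simp_rw [Lagrange.basisDivisor]
  rw [prod_mul_distrib, map_prod]

lemma aux_sumB {F : Type*} [Field F] (v : Fin 5 → F) (hv : Function.Injective v) :
    ∑ i, ∏ j ∈ univ.erase i, (v i - v j)⁻¹ = 0 := by
  have hsum := Lagrange.sum_basis (s := univ) (v := v) hv.injOn univ_nonempty
  have h4 := congrArg (fun p => Polynomial.coeff p 4) hsum
  simp only [finset_sum_coeff] at h4
  have hc : ∀ i : Fin 5, (Lagrange.basis univ v i).coeff 4
      = ∏ j ∈ univ.erase i, (v i - v j)⁻¹ := by
    intro i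
    rw [aux_basis_eq, coeff_C_mul]
    have hm : (∏ j ∈ univ.erase i, (X - C (v j))).Monic :=
      monic_prod_of_monic _ _ fun j _ => monic_X_sub_C _
    have hd : (∏ j ∈ univ.erase i, (X - C (v j))).natDegree = 4 := by
      rw [natDegree_prod _ _ fun j _ => X_sub_C_ne_zero (v j)]
      simp [card_erase_of_mem]
    rw [show (4 : ℕ) = (∏ j ∈ univ.erase i, (X - C (v j))).natDegree from hd.symm,
      hm.coeff_natDegree, mul_one]
  simp_rw [hc] at h4
  simpa [coeff_one] using h4

lemma aux_pf {F : Type*} [Field F] (v : Fin 5 → F) (hv : Function.Injective v) (x : F)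
    (hx : ∀ j, x - v j ≠ 0) :
    (∏ j, (x - v j))⁻¹
      = ∑ i, (∏ j ∈ univ.erase i, (v i - v j)⁻¹) * (x - v i)⁻¹ := by
  have hsum := Lagrange.sum_basis (s := univ) (v := v) hv.injOn univ_nonempty
  have h1 := congrArg (Polynomial.eval x) hsum
  simp only [eval_finset_sum, Lagrange.basis, Lagrange.basisDivisor, eval_prod, eval_mul,
    eval_C, eval_sub, eval_X, eval_one] at h1
  have key : ∑ i, (∏ j ∈ univ.erase i, (v i - v j)⁻¹) * (x - v i)⁻¹
      = (∑ i, ∏ j ∈ univ.erase i, ((v i - v j)⁻¹ * (x - v j))) * (∏ j, (x - v j))⁻¹ := by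
    rw [sum_mul]
    refine Finset.sum_congr rfl fun i _ => ?_
    have hb : ∏ j ∈ univ.erase i, (x - v j) ≠ 0 :=
      prod_ne_zero_iff.2 fun j _ => hx j
    rw [prod_mul_distrib, ← Finset.mul_prod_erase _ _ (mem_univ i), mul_inv]
    calc (∏ j ∈ univ.erase i, (v i - v j)⁻¹) * (x - v i)⁻¹
        = (∏ j ∈ univ.erase i, (v i - v j)⁻¹) *
            ((∏ j ∈ univ.erase i, (x - v j)) * (∏ j ∈ univ.erase i, (x - v j))⁻¹) *
            (x - v i)⁻¹ := by rw [mul_inv_cancel₀ hb, mul_one]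
      _ = (∏ j ∈ univ.erase i, (v i - v j)⁻¹) * (∏ j ∈ univ.erase i, (x - v j)) *
            ((x - v i)⁻¹ * (∏ j ∈ univ.erase i, (x - v j))⁻¹) := by ring
  rw [key, h1, one_mul]

theorem tsum_distinct_rational (r : Fin 5 → ℕ)
    (h : ∀ i j : Fin 5, i < j → r j < r i) :
    ∃ q : ℚ, (∑' k : ℕ, 1 / ∏ i, ((k : ℝ) + r i + 1)) = (q : ℝ) ∧
      q.den ∣ ((Finset.Icc 1 (r 0)).lcm id) ^ 5 := by
  classical
  have hrinj : Function.Injective r := by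
    intro i j hij
    rcases lt_trichotomy i j with hlt | he | hgt
    · exact absurd hij (by have := h i j hlt; omega)
    · exact he
    · exact absurd hij (by have := h j i hgt; omega)
  set v : Fin 5 → ℝ := fun i => -((r i : ℝ) + 1) with hvdef
  have hv : Function.Injective v := by
    intro i j hij
    apply hrinj
    have h2 : (r i : ℝ) = (r j : ℝ) := by
      simp only [v, neg_inj, add_left_inj] at hij; exact hij
    exact_mod_cast h2
  set B : Fin 5 → ℝ := fun i => ∏ j ∈ univ.erase i, (v i - v j)⁻¹ with hBdef
  set f : ℕ → ℝ := fun k => (∏ i, ((k : ℝ) + r i + 1))⁻¹ with hfdef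
  have hxv : ∀ (k : ℕ) (j : Fin 5), (k : ℝ) - v j = (k : ℝ) + r j + 1 := by
    intro k j; simp only [v]; ring
  have hpos : ∀ (k : ℕ) (j : Fin 5), (0:ℝ) < (k : ℝ) + r j + 1 := by
    intro k j; positivity
  have hPF : ∀ k : ℕ, f k = ∑ i, B i * ((k : ℝ) + r i + 1)⁻¹ := by
    intro k
    have hpf := aux_pf v hv (k : ℝ) (fun j => by rw [hxv]; exact ne_of_gt (hpos k j))
    simp only [hxv] at hpf
    exact hpf
  have hsummable : Summable f := by
    have hg : Summable (fun k : ℕ => (((k:ℝ) + 1) ^ 2)⁻¹) := by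
      have h2 := (summable_nat_add_iff 1).mpr
        (Real.summable_one_div_nat_pow.mpr (by norm_num : 1 < 2))
      simpa [one_div] using h2
    refine hg.of_nonneg_of_le (fun k => by positivity) (fun k => ?_)
    have h1 : ((k:ℝ) + 1) ^ 2 ≤ ∏ i, ((k : ℝ) + r i + 1) := by
      calc ((k:ℝ)+1)^2 ≤ ((k:ℝ)+1)^5 :=
            pow_le_pow_right₀ (by linarith [Nat.cast_nonneg (α := ℝ) k]) (by norm_num)
        _ = ∏ _i : Fin 5, ((k:ℝ)+1) := by
            rw [prod_const, card_univ, Fintype.card_fin]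
        _ ≤ ∏ i, ((k:ℝ) + r i + 1) := by
            refine Finset.prod_le_prod (fun i _ => by positivity) (fun i _ => ?_)
            have : (0:ℝ) ≤ (r i : ℝ) := Nat.cast_nonneg _
            linarith
    exact inv_anti₀ (by positivity) h1
  set Hr : ℕ → ℝ := fun n => ∑ m ∈ range n, ((m:ℝ) + 1)⁻¹ with hHrdef
  have hshift : ∀ (a N : ℕ), ∑ k ∈ range N, ((k:ℝ) + a + 1)⁻¹ = Hr (a + N) - Hr a := by
    intro a N
    simp only [Hr]
    rw [Finset.sum_range_add]
    have hc : ∀ k : ℕ, (((a + k : ℕ):ℝ) + 1)⁻¹ = ((k:ℝ) + a + 1)⁻¹ := by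
      intro k; push_cast; ring_nf
    rw [Finset.sum_congr rfl (fun k _ => hc k)]; ring
  have hB0 : ∑ i, B i = 0 := aux_sumB v hv
  have hS : ∀ N : ℕ, ∑ k ∈ range N, f k
      = (∑ i, B i * (Hr (r i + N) - Hr N)) - ∑ i, B i * Hr (r i) := by
    intro N
    simp_rw [hPF]
    rw [Finset.sum_comm]
    have hi : ∀ i : Fin 5, ∑ k ∈ range N, B i * ((k:ℝ) + r i + 1)⁻¹
        = B i * (Hr (r i + N) - Hr (r i)) := by
      intro i; rw [← mul_sum, hshift (r i) N]
    rw [Finset.sum_congr rfl (fun i _ => hi i)]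
    calc ∑ i, B i * (Hr (r i + N) - Hr (r i))
        = ∑ i, (B i * (Hr (r i + N) - Hr N) + B i * Hr N - B i * Hr (r i)) := by
          exact Finset.sum_congr rfl fun i _ => by ring
      _ = ((∑ i, B i * (Hr (r i + N) - Hr N)) + (∑ i, B i) * Hr N) - ∑ i, B i * Hr (r i) := by
          rw [sum_sub_distrib, sum_add_distrib, sum_mul]
      _ = _ := by rw [hB0, zero_mul, add_zero]
  have htail : ∀ i : Fin 5,
      Tendsto (fun N : ℕ => Hr (r i + N) - Hr N) atTop (nhds 0) := by
    intro i
    have heq : ∀ N : ℕ, Hr (r i + N) - Hr N = ∑ j ∈ range (r i), ((N:ℝ) + j + 1)⁻¹ := by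
      intro N
      simp only [Hr]
      rw [add_comm (r i) N, Finset.sum_range_add]
      have hc : ∀ j : ℕ, (((N + j : ℕ):ℝ) + 1)⁻¹ = ((N:ℝ) + j + 1)⁻¹ := by
        intro j; push_cast; ring_nf
      rw [Finset.sum_congr rfl (fun j _ => hc j)]; ring
    simp_rw [heq]
    have hlim : Tendsto (fun N : ℕ => ∑ j ∈ range (r i), ((N:ℝ) + j + 1)⁻¹) atTop
        (nhds (∑ j ∈ range (r i), (0:ℝ))) := by
      refine tendsto_finset_sum _ fun j _ => ?_
      refine Tendsto.inv_tendsto_atTop ?_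
      exact tendsto_atTop_add_const_right _ 1
        (tendsto_atTop_add_const_right _ (j:ℝ) tendsto_natCast_atTop_atTop)
    simpa using hlim
  have hlim2 : Tendsto (fun N : ℕ => ∑ k ∈ range N, f k) atTop
      (nhds (-∑ i, B i * Hr (r i))) := by
    simp_rw [hS]
    have h1 : Tendsto (fun N : ℕ => ∑ i, B i * (Hr (r i + N) - Hr N)) atTop (nhds 0) := by
      have h2 := tendsto_finset_sum (univ : Finset (Fin 5))
        (fun i _ => (htail i).const_mul (B i))
      simpa using h2
    have h3 := h1.sub (tendsto_const_nhds (x := ∑ i, B i * Hr (r i)) (f := atTop))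
    simpa using h3
  have hTeq : ∑' k, f k = -∑ i, B i * Hr (r i) :=
    tendsto_nhds_unique hsummable.hasSum.tendsto_sum_nat hlim2
  set L : ℕ := (Finset.Icc 1 (r 0)).lcm id with hLdef
  set Bq : Fin 5 → ℚ := fun i => ∏ j ∈ univ.erase i, ((r j : ℚ) - (r i : ℚ))⁻¹ with hBqdef
  set q : ℚ := -∑ i, Bq i * harmonic (r i) with hqdef
  have hBcast : ∀ i, ((Bq i : ℚ) : ℝ) = B i := by
    intro i
    simp only [Bq, B, v]
    push_cast
    exact Finset.prod_congr rfl fun j _ => by ring_nf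
  have hHcast : ∀ n : ℕ, ((harmonic n : ℚ) : ℝ) = Hr n := by
    intro n
    simp only [harmonic, Hr]
    push_cast
    rfl
  refine ⟨q, ?_, ?_⟩
  · have hfeq : (∑' k : ℕ, 1 / ∏ i, ((k : ℝ) + r i + 1)) = ∑' k, f k := by
      simp only [f, one_div]
    rw [hfeq, hTeq, hqdef]
    push_cast
    rw [neg_inj]
    exact Finset.sum_congr rfl fun i _ => by rw [hBcast, hHcast]
  · have hL0 : L ≠ 0 := by
      intro h0
      rw [hLdef, Finset.lcm_eq_zero_iff] at h0
      simp only [Set.mem_image, Finset.mem_coe, Finset.mem_Icc, id] at h0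
      obtain ⟨m, hm, hm0⟩ := h0
      omega
    have hrle : ∀ i, r i ≤ r 0 := by
      intro i
      rcases eq_or_ne i 0 with rfl | hne
      · exact le_refl _
      · exact (h 0 i (Fin.pos_of_ne_zero hne)).le
    have hdvd : ∀ m : ℕ, 1 ≤ m → m ≤ r 0 → m ∣ L := by
      intro m h1 h2
      exact Finset.dvd_lcm (by simp [Finset.mem_Icc, h1, h2])
    have hH : ∀ i : Fin 5, (harmonic (r i)) * (L:ℚ) ∈ (Int.castRingHom ℚ).range := by
      intro i
      rw [harmonic, Finset.sum_mul]
      refine Subring.sum_mem _ fun m hm => ?_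
      have hmr : m < r i := Finset.mem_range.mp hm
      have hdv : (m+1) ∣ L := hdvd (m+1) (by omega) (by have := hrle i; omega)
      refine ⟨((L / (m+1) : ℕ) : ℤ), ?_⟩
      have hcd : ((L / (m+1) : ℕ) : ℚ) = (L : ℚ) / ((m+1 : ℕ) : ℚ) :=
        Nat.cast_div hdv (by positivity)
      simp only [RingHom.coe_comp, eq_intCast, Int.cast_natCast]
      rw [hcd, div_eq_mul_inv]
      push_cast
      ring
    have hB4 : ∀ i : Fin 5, Bq i * (L:ℚ)^4 ∈ (Int.castRingHom ℚ).range := by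
      intro i
      have hcard : (univ.erase i).card = 4 := by
        rw [card_erase_of_mem (mem_univ i)]; simp
      have hL4 : (L:ℚ)^4 = ∏ _j ∈ univ.erase i, (L:ℚ) := by rw [prod_const, hcard]
      rw [hL4, hBqdef, ← prod_mul_distrib]
      refine Subring.prod_mem _ fun j hj => ?_
      have hji : j ≠ i := (Finset.mem_erase.mp hj).1
      have hne : r j ≠ r i := fun hrr => hji (hrinj hrr)
      set d : ℤ := (r j : ℤ) - (r i : ℤ) with hddef
      have hd0 : d ≠ 0 := by
        simp only [hddef, sub_ne_zero]
        exact_mod_cast hne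
      have habs : d.natAbs ∈ Finset.Icc 1 (r 0) := by
        rw [Finset.mem_Icc]
        have h1 := hrle j
        have h2 := hrle i
        omega
      have hdl : d ∣ (L:ℤ) := by
        have h3 : (d.natAbs : ℤ) ∣ (L:ℤ) := by
          exact_mod_cast (Finset.dvd_lcm habs : id d.natAbs ∣ L)
        exact (Int.natAbs_dvd).mp h3
      refine ⟨(L:ℤ)/d, ?_⟩
      have hcast : ((r j : ℚ) - (r i : ℚ)) = (d:ℚ) := by rw [hddef]; push_cast; ring
      simp only [eq_intCast]
      rw [Int.cast_div_charZero hdl, hcast, div_eq_mul_inv]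
      push_cast
      ring
    have hq5 : q * (L:ℚ)^5 ∈ (Int.castRingHom ℚ).range := by
      have heq : q * (L:ℚ)^5 = -∑ i, (Bq i * (L:ℚ)^4) * (harmonic (r i) * (L:ℚ)) := by
        rw [hqdef, neg_mul, Finset.sum_mul, neg_inj]
        exact Finset.sum_congr rfl fun i _ => by ring
      rw [heq]
      exact Subring.neg_mem _ (Subring.sum_mem _ fun i _ =>
        Subring.mul_mem _ (hB4 i) (hH i))
    obtain ⟨z, hz⟩ := hq5
    simp only [eq_intCast] at hz
    have hqz : q = (z : ℚ) / (((L:ℤ)^5 : ℤ) : ℚ) := by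
      have hL5 : (((L:ℤ)^5 : ℤ) : ℚ) ≠ 0 := by
        push_cast
        positivity
      rw [eq_div_iff hL5]
      push_cast
      exact hz.symm
    have hden := Rat.den_dvd z ((L:ℤ)^5)
    rw [Rat.divInt_eq_div, ← hqz] at hden
    have hfin : (q.den : ℤ) ∣ ((L^5 : ℕ) : ℤ) := by
      push_cast
      exact_mod_cast hden
    exact_mod_cast hfin
end

section
/- For every positive integer n there exist integers aₙ, bₙ, cₙ, dₙ, eₙ such that lcm(1,…,n)⁵ · ∫_{[0,1]⁵} (1-x₁)ⁿ(1-x₂)ⁿ(1-x₃)ⁿ(1-x₄)ⁿ·Pₙ(x₅) / (1 - x₁x₂x₃x₄x₅) dx = aₙ·ζ(2) + bₙ·ζ(3) + cₙ·ζ(4) + dₙ·ζ(5) + eₙ, where Pₙ(x) = (1/n!)·(d/dx)ⁿ(xⁿ(1-x)ⁿ) is the shifted Legendre polynomial. -/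
/-!
Expanding `1 / (1 - x₁⋯x₅)` as a geometric series and integrating term by term, the integral
becomes `∑ₖ B(k)⁴ G(k)` with `B(k) = ∫₀¹ tᵏ (1 - t)ⁿ dt` and `G(k) = ∫₀¹ tᵏ Pₙ(t) dt`. Both are
integer combinations of `1 / (k + j + 1)`, `0 ≤ j ≤ n`, because `(1 - X)ⁿ` and `Pₙ` are integer
polynomials of degree `≤ n`. With `L = lcm(1, …, n)`, the partial fraction identity
`L / (k + a) · L / (k + b) = L / (b - a) · (L / (k + a) - L / (k + b))`, whose coefficient
`L / (b - a)` is an integer, writes `L⁵ B(k)⁴ G(k)` as an integer combination of the powers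
`(L / (k + j + 1))ˢ`, `2 ≤ s ≤ 5`, and of differences `L / (k + j + 1) - L / (k + m + 1)`.
Summed over `k`, the powers give `Lˢ ζ(s)` minus an integer, and the differences telescope to
integers.
-/

open Finset Polynomial MeasureTheory Filter Topology

theorem Submodule.mul_mem_of_forall_mem_span {R A : Type*} [CommSemiring R] [Semiring A]
    [Algebra R A] {S T : Set A} {M : Submodule R A} (h : ∀ a ∈ S, ∀ b ∈ T, a * b ∈ M) {f g : A}
    (hf : f ∈ span R S) (hg : g ∈ span R T) : f * g ∈ M := by
  have hfg := mul_mem_mul hf hg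
  rw [span_mul_span] at hfg
  refine span_le.mpr ?_ hfg
  rintro _ ⟨a, ha, b, hb, rfl⟩
  exact h a ha b hb

def summingInto {α : Type*} [AddCommGroup α] [TopologicalSpace α] [IsTopologicalAddGroup α]
    (Λ : Submodule ℤ α) : Submodule ℤ (ℕ → α) where
  carrier := {f | ∃ a ∈ Λ, HasSum f a}
  add_mem' := fun ⟨a, ha, hfa⟩ ⟨b, hb, hgb⟩ => ⟨a + b, Λ.add_mem ha hb, hfa.add hgb⟩
  zero_mem' := ⟨0, Λ.zero_mem, hasSum_zero⟩
  smul_mem' := fun c _ ⟨a, ha, hfa⟩ => ⟨c • a, Λ.smul_mem c ha, hfa.const_smul c⟩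

theorem setIntegral_univ_pi_prod {ι : Type*} [Fintype ι] {E : ι → Type*}
    [∀ i, MeasureSpace (E i)] [∀ i, SigmaFinite (volume : Measure (E i))]
    (s : ∀ i, Set (E i)) (g : ∀ i, E i → ℝ) :
    ∫ x in Set.univ.pi s, ∏ i, g i (x i) = ∏ i, ∫ t in s i, g i t := by
  rw [volume_pi, Measure.restrict_pi_pi, integral_fintype_prod_eq_prod]

theorem setIntegral_Icc_zero_one_pow (k : ℕ) :
    ∫ t in Set.Icc (0 : ℝ) 1, t ^ k = 1 / (k + 1) := by
  rw [integral_Icc_eq_integral_Ioc, ← intervalIntegral.integral_of_le zero_le_one, integral_pow]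
  simp

theorem setIntegral_div_one_sub_prod_eq_tsum {ι : Type*} [Fintype ι] (hι : 2 ≤ Fintype.card ι)
    {F : (ι → ℝ) → ℝ} (hF : ContinuousOn F (Set.univ.pi fun _ => Set.Icc 0 1)) :
    ∫ x in Set.univ.pi (fun _ => Set.Icc (0 : ℝ) 1), F x / (1 - ∏ i, x i) =
      ∑' k : ℕ, ∫ x in Set.univ.pi (fun _ => Set.Icc (0 : ℝ) 1), F x * (∏ i, x i) ^ k := by
  classical
  set C : Set (ι → ℝ) := Set.univ.pi fun _ => Set.Icc 0 1
  have hC : IsCompact C := isCompact_univ_pi fun _ => isCompact_Icc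
  have hCm : MeasurableSet C := MeasurableSet.univ_pi fun _ => measurableSet_Icc
  have hprod : ∀ x ∈ C, 0 ≤ ∏ i, x i := fun x hx => prod_nonneg fun i _ => (hx i trivial).1
  obtain ⟨M, hM⟩ := hC.exists_bound_of_continuousOn hF
  have hterm : ∀ k : ℕ, ContinuousOn (fun x => F x * (∏ i, x i) ^ k) C :=
    fun k => hF.mul (by fun_prop)
  have hnorm : ∀ k : ℕ,
      ∫ x in C, ‖F x * (∏ i, x i) ^ k‖ ≤ M * (1 / (k + 1)) ^ Fintype.card ι := fun k =>
    calc ∫ x in C, ‖F x * (∏ i, x i) ^ k‖ ≤ ∫ x in C, M * ∏ i, x i ^ k := by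
          refine setIntegral_mono_on ((hterm k).norm.integrableOn_compact hC)
            ((ContinuousOn.integrableOn_compact hC (by fun_prop))) hCm fun x hx => ?_
          rw [norm_mul, norm_pow, Real.norm_of_nonneg (hprod x hx), ← prod_pow]
          exact mul_le_mul_of_nonneg_right (hM x hx)
            (prod_nonneg fun i _ => pow_nonneg (hx i trivial).1 k)
      _ = M * (1 / (k + 1)) ^ Fintype.card ι := by
          rw [integral_const_mul,
            setIntegral_univ_pi_prod (fun _ : ι => Set.Icc (0 : ℝ) 1) fun _ t => t ^ k]
          simp [setIntegral_Icc_zero_one_pow]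
  have hsummable : Summable fun k : ℕ => M * (1 / ((k : ℝ) + 1)) ^ Fintype.card ι := by
    refine Summable.mul_left M ?_
    have := (summable_nat_add_iff 1).mpr
      (Real.summable_one_div_nat_pow.mpr (by omega : 1 < Fintype.card ι))
    simpa [one_div_pow] using this
  obtain ⟨i₀⟩ : Nonempty ι := Fintype.card_pos_iff.mp (by omega)
  have hae : ∀ᵐ x ∂volume.restrict C,
      F x / (1 - ∏ i, x i) = ∑' k : ℕ, F x * (∏ i, x i) ^ k := by
    rw [ae_restrict_iff' hCm]
    filter_upwards [volume_pi (α := fun _ : ι => ℝ) ▸ Measure.ae_eval_ne _ i₀ (1 : ℝ)]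
      with x hx hxC
    have hlt : ∏ i, x i < 1 := by
      rw [← mul_prod_erase _ _ (mem_univ i₀)]
      calc x i₀ * ∏ i ∈ univ.erase i₀, x i ≤ x i₀ * 1 :=
            mul_le_mul_of_nonneg_left (prod_le_one (fun i _ => (hxC i trivial).1)
              fun i _ => (hxC i trivial).2) (hxC i₀ trivial).1
        _ < 1 := by rw [mul_one]; exact lt_of_le_of_ne (hxC i₀ trivial).2 hx
    rw [tsum_mul_left, tsum_geometric_of_lt_one (hprod x hxC) hlt, div_eq_mul_inv]
  rw [integral_congr_ae hae, integral_tsum_of_summable_integral_norm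
    (fun k => (hterm k).integrableOn_compact hC)
    (Summable.of_nonneg_of_le (fun k => integral_nonneg fun x => norm_nonneg _) hnorm hsummable)]

theorem setIntegral_prod_div_one_sub_prod_eq_tsum {ι : Type*} [Fintype ι]
    (hι : 2 ≤ Fintype.card ι) {g : ι → ℝ → ℝ} (hg : ∀ i, Continuous (g i)) :
    ∫ x in Set.univ.pi (fun _ => Set.Icc (0 : ℝ) 1), (∏ i, g i (x i)) / (1 - ∏ i, x i) =
      ∑' k : ℕ, ∏ i, ∫ t in Set.Icc (0 : ℝ) 1, g i t * t ^ k := by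
  rw [setIntegral_div_one_sub_prod_eq_tsum hι (by fun_prop)]
  refine tsum_congr fun k => ?_
  rw [← setIntegral_univ_pi_prod]
  simp_rw [← prod_pow, ← prod_mul_distrib]

theorem iteratedDeriv_aeval {𝕜 R : Type*} [NontriviallyNormedField 𝕜] [CommSemiring R]
    [Algebra R 𝕜] (q : R[X]) (k : ℕ) :
    iteratedDeriv k (fun x : 𝕜 => aeval x q) = fun x => aeval x (derivative^[k] q) := by
  induction k with
  | zero => rfl
  | succ k ih =>
    ext x
    rw [iteratedDeriv_succ, ih, Function.iterate_succ_apply', Polynomial.deriv_aeval]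

theorem aeval_shiftedLegendre_eq_iteratedDeriv (n : ℕ) (y : ℝ) :
    aeval y (shiftedLegendre n) =
      1 / (n.factorial : ℝ) * iteratedDeriv n (fun t : ℝ => t ^ n * (1 - t) ^ n) y := by
  have h : (fun t : ℝ => t ^ n * (1 - t) ^ n) = fun t => aeval t (X ^ n * (1 - X : ℤ[X]) ^ n) := by
    ext
    simp
  rw [h, iteratedDeriv_aeval, ← factorial_mul_shiftedLegendre_eq]
  simp [field]

noncomputable def zetaNat (s : ℕ) : ℝ := ∑' k : ℕ, 1 / ((k : ℝ) + 1) ^ s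

noncomputable def recipPow (L j s k : ℕ) : ℝ := ((L : ℝ) / (k + j + 1)) ^ s

theorem hasSum_recipPow (L j : ℕ) {s : ℕ} (hs : 2 ≤ s) :
    HasSum (recipPow L j s)
      ((L : ℝ) ^ s * (zetaNat s - ∑ i ∈ range j, 1 / ((i : ℝ) + 1) ^ s)) := by
  have hζ : HasSum (fun k : ℕ => 1 / ((k : ℝ) + 1) ^ s) (zetaNat s) := by
    refine Summable.hasSum ?_
    have := (summable_nat_add_iff 1).mpr (Real.summable_one_div_nat_pow.mpr (by omega : 1 < s))
    exact_mod_cast this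
  have hshift := ((hasSum_nat_add_iff (f := fun k : ℕ => 1 / ((k : ℝ) + 1) ^ s) j).mpr
    (by rwa [sub_add_cancel])).mul_left ((L : ℝ) ^ s)
  have hrec : recipPow L j s = fun k => (L : ℝ) ^ s * (1 / (((k + j : ℕ) : ℝ) + 1) ^ s) := by
    ext k
    simp only [recipPow, div_pow, Nat.cast_add]
    ring
  rwa [hrec]

theorem hasSum_recipPow_sub_succ (L j : ℕ) :
    HasSum (recipPow L j 1 - recipPow L (j + 1) 1) ((L : ℝ) / (j + 1)) := by
  set f : ℕ → ℝ := fun k => (L : ℝ) / (k + j + 1)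
  have hf : recipPow L j 1 - recipPow L (j + 1) 1 = fun k => f k - f (k + 1) := by
    ext k
    simp only [recipPow, f, pow_one, Pi.sub_apply]
    push_cast
    ring_nf
  have hf_anti : Antitone f := fun a b hab => by
    dsimp only [f]
    gcongr
  have hf_lim : Tendsto f atTop (𝓝 0) := by
    refine ((tendsto_add_atTop_iff_nat (j + 1)).mpr
      (tendsto_const_div_atTop_nhds_zero_nat (L : ℝ))).congr fun k => ?_
    simp only [f]
    push_cast
    ring_nf
  rw [hf, hasSum_iff_tendsto_nat_of_nonneg (fun k => sub_nonneg.mpr (hf_anti k.le_succ))]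
  simp_rw [sum_range_sub']
  simpa [f] using (tendsto_const_nhds (x := f 0)).sub hf_lim

theorem hasSum_recipPow_zero_sub (L j : ℕ) :
    HasSum (recipPow L 0 1 - recipPow L j 1) (∑ i ∈ range j, (L : ℝ) / (i + 1)) := by
  induction j with
  | zero =>
    rw [sub_self, sum_range_zero]
    exact hasSum_zero
  | succ j ih =>
    rw [sum_range_succ, ← sub_add_sub_cancel _ (recipPow L j 1)]
    exact ih.add (hasSum_recipPow_sub_succ L j)

section PartialFractions

variable {n L : ℕ}

def weightOneForms (n L : ℕ) : Submodule ℤ (ℕ → ℝ) :=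
  Submodule.span ℤ {f | ∃ j ≤ n, f = recipPow L j 1}

/-- `recipPow L j 1` alone is a divergent harmonic tail, so among the first powers only
differences are generators. -/
def convergentForms (n L r : ℕ) : Submodule ℤ (ℕ → ℝ) :=
  Submodule.span ℤ ({f | ∃ j ≤ n, ∃ s ∈ Set.Icc 2 r, f = recipPow L j s} ∪
    {f | ∃ j ≤ n, ∃ m ≤ n, f = recipPow L j 1 - recipPow L m 1})

theorem convergentForms_mono {r r' : ℕ} (h : r ≤ r') :
    convergentForms n L r ≤ convergentForms n L r' :=
  Submodule.span_mono <| Set.union_subset_union_left _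
    fun _ ⟨j, hj, s, hs, hf⟩ => ⟨j, hj, s, ⟨hs.1, hs.2.trans h⟩, hf⟩

theorem recipPow_mem_convergentForms {j s r : ℕ} (hj : j ≤ n) (hs : 2 ≤ s) (hsr : s ≤ r) :
    recipPow L j s ∈ convergentForms n L r :=
  Submodule.subset_span (Or.inl ⟨j, hj, s, ⟨hs, hsr⟩, rfl⟩)

theorem recipPow_sub_mem_convergentForms {j m r : ℕ} (hj : j ≤ n) (hm : m ≤ n) :
    recipPow L j 1 - recipPow L m 1 ∈ convergentForms n L r :=
  Submodule.subset_span (Or.inr ⟨j, hj, m, hm, rfl⟩)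

theorem exists_recipPow_one_mul_recipPow_one (hL : ∀ d ∈ Icc 1 n, d ∣ L) {j m : ℕ}
    (hj : j ≤ n) (hm : m ≤ n) (hjm : j ≠ m) :
    ∃ δ : ℤ, recipPow L j 1 * recipPow L m 1 = δ • (recipPow L j 1 - recipPow L m 1) := by
  obtain ⟨δ, hδ⟩ : ((m : ℤ) - j) ∣ L :=
    Int.natAbs_dvd.mp (Int.natCast_dvd_natCast.mpr (hL _ (mem_Icc.mpr ⟨by omega, by omega⟩)))
  have hδ' : (L : ℝ) = ((m : ℝ) - j) * δ := by exact_mod_cast hδ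
  have hmj : (m : ℝ) - j ≠ 0 := sub_ne_zero.mpr (by exact_mod_cast hjm.symm)
  refine ⟨δ, funext fun k => ?_⟩
  simp only [recipPow, pow_one, Pi.mul_apply, Pi.smul_apply, Pi.sub_apply, zsmul_eq_mul, hδ']
  field_simp
  ring

theorem recipPow_mul_recipPow_one_mem (hL : ∀ d ∈ Icc 1 n, d ∣ L) {j m : ℕ} (hj : j ≤ n)
    (hm : m ≤ n) (s : ℕ) :
    recipPow L j (s + 1) * recipPow L m 1 ∈ convergentForms n L (s + 2) := by
  have hsucc : ∀ t, recipPow L j (t + 1) = recipPow L j t * recipPow L j 1 :=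
    fun t => funext fun k => by simp only [recipPow, Pi.mul_apply, pow_one, pow_succ _ t]
  rcases eq_or_ne j m with rfl | hjm
  · rw [← hsucc]
    exact recipPow_mem_convergentForms hj (by omega) le_rfl
  obtain ⟨δ, hδ⟩ := exists_recipPow_one_mul_recipPow_one hL hj hm hjm
  induction s with
  | zero =>
    rw [zero_add, hδ]
    exact Submodule.smul_mem _ _ (recipPow_sub_mem_convergentForms hj hm)
  | succ s ih =>
    have hrec : recipPow L j (s + 2) * recipPow L m 1 =
        δ • recipPow L j (s + 2) - δ • (recipPow L j (s + 1) * recipPow L m 1) := by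
      rw [hsucc (s + 1), mul_assoc, hδ, mul_smul_comm, mul_sub, ← hsucc, smul_sub]
    rw [hrec]
    exact Submodule.sub_mem _
      (Submodule.smul_mem _ _ (recipPow_mem_convergentForms hj (by omega) (by omega)))
      (Submodule.smul_mem _ _ (convergentForms_mono (by omega) ih))

theorem mul_mem_convergentForms_two (hL : ∀ d ∈ Icc 1 n, d ∣ L) {f g : ℕ → ℝ}
    (hf : f ∈ weightOneForms n L) (hg : g ∈ weightOneForms n L) :
    f * g ∈ convergentForms n L 2 := by
  refine Submodule.mul_mem_of_forall_mem_span ?_ hf hg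
  rintro _ ⟨j, hj, rfl⟩ _ ⟨m, hm, rfl⟩
  exact recipPow_mul_recipPow_one_mem hL hj hm 0

theorem mul_mem_convergentForms (hL : ∀ d ∈ Icc 1 n, d ∣ L) {r : ℕ} (hr : 1 ≤ r)
    {f g : ℕ → ℝ} (hf : f ∈ convergentForms n L r) (hg : g ∈ weightOneForms n L) :
    f * g ∈ convergentForms n L (r + 1) := by
  refine Submodule.mul_mem_of_forall_mem_span ?_ hf hg
  rintro _ (⟨j, hj, s, ⟨hs, hsr⟩, rfl⟩ | ⟨j, hj, p, hp, rfl⟩) _ ⟨m, hm, rfl⟩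
  · obtain ⟨s, rfl⟩ := Nat.exists_eq_add_of_le' (by omega : 1 ≤ s)
    exact convergentForms_mono (by omega) (recipPow_mul_recipPow_one_mem hL hj hm s)
  · rw [sub_mul]
    exact convergentForms_mono (by omega) (Submodule.sub_mem _
      (recipPow_mul_recipPow_one_mem hL hj hm 0) (recipPow_mul_recipPow_one_mem hL hp hm 0))

theorem prod_mem_convergentForms (hL : ∀ d ∈ Icc 1 n, d ∣ L) :
    ∀ (r : ℕ) (f : Fin (r + 2) → ℕ → ℝ), (∀ i, f i ∈ weightOneForms n L) →
      ∏ i, f i ∈ convergentForms n L (r + 2)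
  | 0, f, hf => by
    rw [Fin.prod_univ_two]
    exact mul_mem_convergentForms_two hL (hf 0) (hf 1)
  | r + 1, f, hf => by
    rw [Fin.prod_univ_castSucc]
    exact mul_mem_convergentForms hL (by omega)
      (prod_mem_convergentForms hL r _ fun i => hf _) (hf _)

theorem convergentForms_le_summingInto (hL : ∀ d ∈ Icc 1 n, d ∣ L) {Λ : Submodule ℤ ℝ}
    {r : ℕ} (hΛ : (1 : ℝ) ∈ Λ) (hζ : ∀ s ∈ Set.Icc 2 r, zetaNat s ∈ Λ) :
    convergentForms n L r ≤ summingInto Λ := by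
  have hdiv : ∀ i < n, ∀ s, ((L : ℝ) / (i + 1)) ^ s ∈ Λ := fun i hi s => by
    rw [← Nat.cast_succ, ← Nat.cast_div (hL _ (mem_Icc.mpr ⟨by omega, hi⟩)) (by positivity),
      ← Nat.cast_pow, ← nsmul_one]
    exact Λ.nsmul_mem hΛ _
  refine Submodule.span_le.mpr ?_
  rintro _ (⟨j, hj, s, ⟨hs, hsr⟩, rfl⟩ | ⟨j, hj, m, hm, rfl⟩)
  · refine ⟨_, ?_, hasSum_recipPow L j hs⟩
    rw [mul_sub, mul_sum]
    refine Λ.sub_mem (by simpa using Λ.nsmul_mem (hζ s ⟨hs, hsr⟩) (L ^ s))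
      (Λ.sum_mem fun i hi => ?_)
    rw [mul_one_div, ← div_pow]
    exact hdiv i ((mem_range.mp hi).trans_le hj) s
  · have hsum := (hasSum_recipPow_zero_sub L m).sub (hasSum_recipPow_zero_sub L j)
    rw [← Pi.sub_def, sub_sub_sub_cancel_left] at hsum
    refine ⟨_, Λ.sub_mem (Λ.sum_mem fun i hi => ?_) (Λ.sum_mem fun i hi => ?_), hsum⟩
    · simpa using hdiv i ((mem_range.mp hi).trans_le hm) 1
    · simpa using hdiv i ((mem_range.mp hi).trans_le hj) 1

theorem exists_tsum_eq_of_mem_convergentForms (hL : ∀ d ∈ Icc 1 n, d ∣ L) {f : ℕ → ℝ}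
    (hf : f ∈ convergentForms n L 5) : ∃ a b c d e : ℤ,
      ∑' k, f k = a * zetaNat 2 + b * zetaNat 3 + c * zetaNat 4 + d * zetaNat 5 + e := by
  obtain ⟨v, hvΛ, hv⟩ := convergentForms_le_summingInto hL
    (Λ := Submodule.span ℤ (Set.range ![zetaNat 2, zetaNat 3, zetaNat 4, zetaNat 5, 1]))
    (Submodule.subset_span ⟨4, rfl⟩)
    (fun s ⟨hs2, hs5⟩ => by
      interval_cases s
      exacts [Submodule.subset_span ⟨0, rfl⟩, Submodule.subset_span ⟨1, rfl⟩,
        Submodule.subset_span ⟨2, rfl⟩, Submodule.subset_span ⟨3, rfl⟩]) hf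
  obtain ⟨c, rfl⟩ := (Submodule.mem_span_range_iff_exists_fun ℤ).mp hvΛ
  refine ⟨c 0, c 1, c 2, c 3, c 4, ?_⟩
  simp [hv.tsum_eq, Fin.sum_univ_five]

end PartialFractions

theorem setIntegral_aeval_mul_pow_mem_weightOneForms {n : ℕ} (L : ℕ) {q : ℤ[X]}
    (hq : q.natDegree ≤ n) :
    (fun k : ℕ => (L : ℝ) * ∫ t in Set.Icc (0 : ℝ) 1, aeval t q * t ^ k) ∈
      weightOneForms n L := by
  have h : (fun k : ℕ => (L : ℝ) * ∫ t in Set.Icc (0 : ℝ) 1, aeval t q * t ^ k) =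
      ∑ i ∈ range (n + 1), q.coeff i • recipPow L i 1 := by
    ext k
    simp_rw [aeval_eq_sum_range' (Nat.lt_succ_of_le hq), sum_mul, zsmul_eq_mul, mul_assoc,
      ← pow_add]
    rw [integral_finsetSum _ fun i _ => Continuous.integrableOn_Icc (by fun_prop)]
    simp only [integral_const_mul, setIntegral_Icc_zero_one_pow, Nat.cast_add, one_div, mul_sum,
      Finset.sum_apply, Pi.mul_apply, Pi.intCast_apply, recipPow, pow_one]
    refine sum_congr rfl fun i _ => ?_
    ring
  rw [h]
  exact Submodule.sum_mem _ fun i hi => Submodule.smul_mem _ _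
    (Submodule.subset_span ⟨i, Nat.lt_succ_iff.mp (mem_range.mp hi), rfl⟩)

theorem natDegree_one_sub_X_pow_le {R : Type*} [CommRing R] (n : ℕ) :
    ((1 - X : R[X]) ^ n).natDegree ≤ n := by
  compute_degree!

theorem linear_form_in_zetas_general (n : ℕ)
    (P : ℝ → ℝ)
    (hP : ∀ y : ℝ, P y = (1 / (n.factorial : ℝ)) *
      iteratedDeriv n (fun t : ℝ => t ^ n * (1 - t) ^ n) y) :
    ∃ a b c d e : ℤ,
      ((((Finset.Icc 1 n).lcm id : ℕ) : ℝ)) ^ 5 *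
        ∫ x in (Set.univ.pi fun _ : Fin 5 => Set.Icc (0:ℝ) 1),
          ((1 - x 0) ^ n * (1 - x 1) ^ n * (1 - x 2) ^ n * (1 - x 3) ^ n * P (x 4)) /
            (1 - ∏ i, x i) =
      a * (∑' k : ℕ, 1 / ((k : ℝ) + 1) ^ 2) + b * (∑' k : ℕ, 1 / ((k : ℝ) + 1) ^ 3) +
        c * (∑' k : ℕ, 1 / ((k : ℝ) + 1) ^ 4) + d * (∑' k : ℕ, 1 / ((k : ℝ) + 1) ^ 5) + e := by
  obtain rfl : P = fun y => aeval y (shiftedLegendre n) :=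
    funext fun y => by rw [hP, aeval_shiftedLegendre_eq_iteratedDeriv]
  set L := (Finset.Icc 1 n).lcm id
  have hL : ∀ d ∈ Icc 1 n, d ∣ L := fun d hd => Finset.dvd_lcm hd
  let q : Fin 5 → ℤ[X] := ![(1 - X) ^ n, (1 - X) ^ n, (1 - X) ^ n, (1 - X) ^ n, shiftedLegendre n]
  have hq : ∀ i, (q i).natDegree ≤ n := by
    intro i
    fin_cases i
    exacts [natDegree_one_sub_X_pow_le n, natDegree_one_sub_X_pow_le n,
      natDegree_one_sub_X_pow_le n, natDegree_one_sub_X_pow_le n,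
      (natDegree_shiftedLegendre n).le]
  have hintegrand : ∀ x : Fin 5 → ℝ, (1 - x 0) ^ n * (1 - x 1) ^ n * (1 - x 2) ^ n *
      (1 - x 3) ^ n * aeval (x 4) (shiftedLegendre n) = ∏ i, aeval (x i) (q i) := fun x => by
    simp [q, Fin.prod_univ_five]
  obtain ⟨a, b, c, d, e, h⟩ := exists_tsum_eq_of_mem_convergentForms hL
    (prod_mem_convergentForms hL 3 _ fun i => setIntegral_aeval_mul_pow_mem_weightOneForms L (hq i))
  refine ⟨a, b, c, d, e, ?_⟩
  simp_rw [hintegrand]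
  rw [setIntegral_prod_div_one_sub_prod_eq_tsum (g := fun i t => aeval t (q i)) (by simp)
    fun i => by fun_prop, ← tsum_mul_left]
  refine Eq.trans (tsum_congr fun k => ?_) h
  simp [prod_mul_distrib]

theorem linear_form_in_zetas (n : ℕ) (hn : 0 < n)
    (P : ℝ → ℝ)
    (hP : ∀ y : ℝ, P y = (1 / (n.factorial : ℝ)) *
      iteratedDeriv n (fun t : ℝ => t ^ n * (1 - t) ^ n) y) :
    ∃ a b c d e : ℤ,
      ((((Finset.Icc 1 n).lcm id : ℕ) : ℝ)) ^ 5 *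
        ∫ x in (Set.univ.pi fun _ : Fin 5 => Set.Icc (0:ℝ) 1),
          ((1 - x 0) ^ n * (1 - x 1) ^ n * (1 - x 2) ^ n * (1 - x 3) ^ n * P (x 4)) /
            (1 - ∏ i, x i) =
      a * (∑' k : ℕ, 1 / ((k : ℝ) + 1) ^ 2) + b * (∑' k : ℕ, 1 / ((k : ℝ) + 1) ^ 3) +
        c * (∑' k : ℕ, 1 / ((k : ℝ) + 1) ^ 4) + d * (∑' k : ℕ, 1 / ((k : ℝ) + 1) ^ 5) + e :=
  linear_form_in_zetas_general n P hP
end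

section
/- Define Q(x₁,…,x₅) = x₁(1-x₁)·x₂(1-x₂)·x₃(1-x₃)·x₄(1-x₄)·x₅(1-x₅)/(1-x₁x₂x₃x₄x₅) for x ∈ [0,1]⁵ (with Q = 0 at (1,1,1,1,1)). Then sup over [0,1]⁵ of |Q| is at most (0.51)⁵·(0.495)⁵/(1-(0.51)⁵). -/
/-!
By AM-GM, with `s` the mean of the coordinates of `x ∈ [0,1]ⁿ`, we have `∏ xᵢ ≤ sⁿ` and
`∏ (1 - xᵢ) ≤ (1 - s)ⁿ`, so the numerator of `Q(x)` is at most `sⁿ(1 - s)ⁿ` while its denominator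
is at least `1 - sⁿ`. Hence `sup Q` is bounded by the supremum of `sⁿ(1 - s)ⁿ / (1 - sⁿ)` over the
diagonal; for `n = 5`, bounding that is an elementary polynomial inequality on `[0,1]`.
-/

open Finset

theorem Real.prod_le_mean_pow {ι : Type*} (s : Finset ι) (z : ι → ℝ) (hz : ∀ i ∈ s, 0 ≤ z i) :
    ∏ i ∈ s, z i ≤ ((∑ i ∈ s, z i) / #s) ^ #s := by
  rcases s.eq_empty_or_nonempty with rfl | hs
  · simp
  have hn : (0 : ℝ) < #s := by exact_mod_cast hs.card_pos
  have amgm := Real.geom_mean_le_arith_mean s (fun _ ↦ 1) z (fun _ _ ↦ zero_le_one)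
    (by simpa using hn) hz
  simp only [Real.rpow_one, one_mul, sum_const, nsmul_eq_mul, mul_one] at amgm
  calc ∏ i ∈ s, z i = ((∏ i ∈ s, z i) ^ (#s : ℝ)⁻¹) ^ #s :=
        (Real.rpow_inv_natCast_pow (prod_nonneg hz) hs.card_pos.ne').symm
    _ ≤ _ := pow_le_pow_left₀ (Real.rpow_nonneg (prod_nonneg hz) _) amgm _

section UnitCube

variable {ι : Type*} [Fintype ι] {x : ι → ℝ}

theorem mean_mem_Icc_of_mem_Icc (hx : ∀ i, x i ∈ Set.Icc (0 : ℝ) 1) :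
    (∑ i, x i) / Fintype.card ι ∈ Set.Icc (0 : ℝ) 1 := by
  refine ⟨div_nonneg (sum_nonneg fun i _ ↦ (hx i).1) (Nat.cast_nonneg _),
    div_le_one_of_le₀ ?_ (Nat.cast_nonneg _)⟩
  simpa using sum_le_sum fun i (_ : i ∈ univ) ↦ (hx i).2

theorem prod_le_mean_pow_of_nonneg (hx : ∀ i, 0 ≤ x i) :
    ∏ i, x i ≤ ((∑ i, x i) / Fintype.card ι) ^ Fintype.card ι := by
  simpa using Real.prod_le_mean_pow univ x fun i _ ↦ hx i

theorem prod_one_sub_le_one_sub_mean_pow [Nonempty ι] (hx : ∀ i, x i ≤ 1) :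
    ∏ i, (1 - x i) ≤ (1 - (∑ i, x i) / Fintype.card ι) ^ Fintype.card ι := by
  have hn : (Fintype.card ι : ℝ) ≠ 0 := by exact_mod_cast Fintype.card_ne_zero
  have hmean : (∑ i, (1 - x i)) / Fintype.card ι = 1 - (∑ i, x i) / Fintype.card ι := by
    rw [sum_sub_distrib, sum_const, card_univ, nsmul_one]
    field_simp
  rw [← hmean]
  exact prod_le_mean_pow_of_nonneg fun i ↦ sub_nonneg.2 (hx i)

theorem abs_prod_mul_one_sub_div_le [Nonempty ι] {C : ℝ} (hC : 0 ≤ C)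
    (hdiag : ∀ t ∈ Set.Icc (0 : ℝ) 1,
      t ^ Fintype.card ι * (1 - t) ^ Fintype.card ι ≤ C * (1 - t ^ Fintype.card ι))
    (hx : ∀ i, x i ∈ Set.Icc (0 : ℝ) 1) :
    |(∏ i, x i * (1 - x i)) / (1 - ∏ i, x i)| ≤ C := by
  set n := Fintype.card ι
  set s := (∑ i, x i) / n
  have hs : s ∈ Set.Icc (0 : ℝ) 1 := mean_mem_Icc_of_mem_Icc hx
  have hprod_le : ∏ i, x i ≤ s ^ n := prod_le_mean_pow_of_nonneg fun i ↦ (hx i).1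
  have hprod_le_one : ∏ i, x i ≤ 1 :=
    prod_le_one (fun i _ ↦ (hx i).1) fun i _ ↦ (hx i).2
  rcases hprod_le_one.eq_or_lt with hone | hlt
  · -- `x / 0 = 0` here, matching the convention `Q = 0` at the corner `(1, …, 1)`.
    simpa [hone] using hC
  have hden : 0 < 1 - ∏ i, x i := sub_pos.2 hlt
  have hnum : 0 ≤ ∏ i, x i * (1 - x i) :=
    prod_nonneg fun i _ ↦ mul_nonneg (hx i).1 (sub_nonneg.2 (hx i).2)
  rw [abs_of_nonneg (div_nonneg hnum hden.le), div_le_iff₀ hden]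
  calc ∏ i, x i * (1 - x i) = (∏ i, x i) * ∏ i, (1 - x i) := prod_mul_distrib
    _ ≤ s ^ n * (1 - s) ^ n :=
        mul_le_mul hprod_le (prod_one_sub_le_one_sub_mean_pow fun i ↦ (hx i).2)
          (prod_nonneg fun i _ ↦ sub_nonneg.2 (hx i).2) (pow_nonneg hs.1 n)
    _ ≤ C * (1 - s ^ n) := hdiag s hs
    _ ≤ C * (1 - ∏ i, x i) := by gcongr

end UnitCube

theorem pow_five_mul_one_sub_pow_five_le {t : ℝ} (h0 : 0 ≤ t) (h1 : t ≤ 1) :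
    t ^ 5 * (1 - t) ^ 5 ≤
      (0.51 : ℝ) ^ 5 * (0.495 : ℝ) ^ 5 / (1 - (0.51 : ℝ) ^ 5) * (1 - t ^ 5) := by
  rw [div_mul_eq_mul_div, le_div_iff₀ (by norm_num)]
  have h1' : 0 ≤ 1 - t := sub_nonneg.2 h1
  nlinarith [sq_nonneg (t * (1 - t) ^ 2), sq_nonneg (t ^ 2 * (t - 1 / 2)),
    mul_nonneg (pow_nonneg h0 5) (sq_nonneg (t - 1 / 2)),
    mul_nonneg (mul_nonneg (pow_nonneg h0 3) h1') (sq_nonneg (t - 1 / 2))]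

theorem Q_sup_bound :
    ∀ x ∈ Set.univ.pi fun _ : Fin 5 => Set.Icc (0:ℝ) 1,
      |(∏ i, x i * (1 - x i)) / (1 - ∏ i, x i)| ≤
        (0.51 : ℝ) ^ 5 * (0.495 : ℝ) ^ 5 / (1 - (0.51 : ℝ) ^ 5) := by
  intro x hx
  refine abs_prod_mul_one_sub_div_le (by norm_num) (fun t ht ↦ ?_) fun i ↦ hx i trivial
  simpa using pow_five_mul_one_sub_pow_five_le ht.1 ht.2
end

section
/- For all sufficiently large n, lcm(1,2,…,n) ≤ 3ⁿ. -/
/-!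
Hanson's argument. Let `D = {2, 3, 7, 43}` and `r = n - ∑_{d ∈ D} ⌊n/d⌋`, so `r ≈ n/1806`.
Comparing `p`-adic valuations through Legendre's formula shows that `lcm(1..n)` divides
`C · lcm(1..r)`, where `C = n! / (∏_{d ∈ D} ⌊n/d⌋! · r!)`. Bounding `C` by a single term of the
multinomial expansion of `n ^ n` gives `log C ≤ n · H + o(n)` with
`H = ∑_{d ∈ D} (log d)/d + (log 1806)/1806 ≈ 1.0824`, and Chebyshev's bound
`log lcm(1..r) = O(r)` costs only `O(n/1806)`; the total stays below `n · log 3`.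
-/

open Finset Real Filter Topology
open scoped Nat

lemma Finset.sum_div_le_div_sum {ι : Type*} (s : Finset ι) (a : ι → ℕ) (q : ℕ) :
    ∑ i ∈ s, a i / q ≤ (∑ i ∈ s, a i) / q := by
  rcases q.eq_zero_or_pos with rfl | hq
  · simp
  rw [Nat.le_div_iff_mul_le hq, sum_mul]
  exact sum_le_sum fun i _ ↦ Nat.div_mul_le_self (a i) q

lemma Nat.choose_mul_pow_mul_pow_le (a b : ℕ) :
    (a + b).choose a * (a ^ a * b ^ b) ≤ (a + b) ^ (a + b) := by
  have hterm := single_le_sum (f := fun k ↦ a ^ k * b ^ (a + b - k) * (a + b).choose k)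
    (fun _ _ ↦ Nat.zero_le _) (mem_range.2 (by omega : a < a + b + 1))
  have h := add_pow a b (a + b)
  simp only [Nat.cast_id] at h
  rw [← h, Nat.add_sub_cancel_left] at hterm
  simpa [mul_comm, mul_left_comm] using hterm

lemma Nat.multinomial_mul_prod_pow_le {ι : Type*} [DecidableEq ι] (s : Finset ι) (f : ι → ℕ) :
    multinomial s f * ∏ i ∈ s, f i ^ f i ≤ (∑ i ∈ s, f i) ^ ∑ i ∈ s, f i := by
  induction s using Finset.induction_on with
  | empty => simp
  | insert a s ha ih =>
    rw [multinomial_insert ha, prod_insert ha, sum_insert ha]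
    calc (f a + ∑ i ∈ s, f i).choose (f a) * multinomial s f * (f a ^ f a * ∏ i ∈ s, f i ^ f i)
        = (f a + ∑ i ∈ s, f i).choose (f a) * f a ^ f a *
            (multinomial s f * ∏ i ∈ s, f i ^ f i) := by ring
      _ ≤ (f a + ∑ i ∈ s, f i).choose (f a) * f a ^ f a *
            (∑ i ∈ s, f i) ^ ∑ i ∈ s, f i := by gcongr
      _ ≤ _ := by simpa [mul_assoc] using choose_mul_pow_mul_pow_le (f a) (∑ i ∈ s, f i)

lemma Real.mul_negMulLog_div {N : ℝ} (hN : N ≠ 0) (x : ℝ) :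
    N * negMulLog (x / N) = x * log N - x * log x := by
  rw [div_eq_mul_inv, negMulLog_mul, negMulLog, negMulLog, log_inv]
  field_simp
  ring

lemma log_lcmUpto_le (n : ℕ) : log n.lcmUpto ≤ (log 4 + 4) * n := by
  rw [← Chebyshev.psi_eq_log_lcmUpto]
  exact Chebyshev.psi_le_const_mul_self n.cast_nonneg

lemma tendsto_natDiv_div_atTop (d : ℕ) :
    Tendsto (fun n : ℕ ↦ ((n / d : ℕ) : ℝ) / n) atTop (𝓝 (d : ℝ)⁻¹) := by
  refine ((tendsto_nat_floor_mul_div_atTop (inv_nonneg.2 d.cast_nonneg)).comp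
    tendsto_natCast_atTop_atTop).congr fun n ↦ ?_
  simp [inv_mul_eq_div, Nat.floor_div_eq_div]

namespace Hanson

variable {D : Finset ℕ}

def rest (D : Finset ℕ) (n : ℕ) : ℕ := n - ∑ d ∈ D, n / d

/-- The multinomial coefficient `n! / ((∏ d ∈ D, (n / d)!) * (rest D n)!)`. -/
def coeff (D : Finset ℕ) (n : ℕ) : ℕ := n.choose (rest D n) * Nat.multinomial D (n / ·)

lemma rest_le (n : ℕ) : rest D n ≤ n := Nat.sub_le _ _

lemma coeff_pos (n : ℕ) : 0 < coeff D n :=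
  Nat.mul_pos (Nat.choose_pos (rest_le n)) (Nat.multinomial_pos _ _)

lemma sum_div_lt_self (hD : ∑ d ∈ D, (d : ℝ)⁻¹ < 1) {m : ℕ} (hm : 0 < m) :
    ∑ d ∈ D, m / d < m := by
  have hm' : (0 : ℝ) < m := Nat.cast_pos.2 hm
  have : ((∑ d ∈ D, m / d : ℕ) : ℝ) < m := calc
    ((∑ d ∈ D, m / d : ℕ) : ℝ) ≤ ∑ d ∈ D, (m : ℝ) / d := by
      push_cast; exact sum_le_sum fun d _ ↦ Nat.cast_div_le
    _ = m * ∑ d ∈ D, (d : ℝ)⁻¹ := by rw [mul_sum]; rfl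
    _ < m := mul_lt_of_lt_one_right hm' hD
  exact_mod_cast this

lemma sum_div_add_rest (hD : ∑ d ∈ D, (d : ℝ)⁻¹ < 1) (n : ℕ) :
    ∑ d ∈ D, n / d + rest D n = n := by
  rcases n.eq_zero_or_pos with rfl | hn
  · simp [rest]
  · have := sum_div_lt_self hD hn
    unfold rest; omega

lemma coeff_mul_prod_factorial (hD : ∑ d ∈ D, (d : ℝ)⁻¹ < 1) (n : ℕ) :
    coeff D n * ((∏ d ∈ D, (n / d)!) * (rest D n)!) = n ! := by
  have hsum : n - rest D n = ∑ d ∈ D, n / d := by have := sum_div_add_rest hD n; omega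
  have hmult := Nat.multinomial_spec D (n / ·)
  have hchoose := Nat.choose_mul_factorial_mul_factorial (rest_le (D := D) n)
  rw [hsum, ← hmult] at hchoose
  rw [coeff, ← hchoose]
  ring

lemma coeff_mul_prod_pow_le (hD : ∑ d ∈ D, (d : ℝ)⁻¹ < 1) (n : ℕ) :
    coeff D n * ((∏ d ∈ D, (n / d) ^ (n / d)) * rest D n ^ rest D n) ≤ n ^ n := by
  set S := ∑ d ∈ D, n / d
  have hn : rest D n + S = n := by rw [add_comm]; exact sum_div_add_rest hD n
  calc coeff D n * ((∏ d ∈ D, (n / d) ^ (n / d)) * rest D n ^ rest D n)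
      = n.choose (rest D n) * rest D n ^ rest D n *
          (Nat.multinomial D (n / ·) * ∏ d ∈ D, (n / d) ^ (n / d)) := by rw [coeff]; ring
    _ ≤ n.choose (rest D n) * rest D n ^ rest D n * S ^ S := by
        gcongr; exact Nat.multinomial_mul_prod_pow_le D (n / ·)
    _ ≤ n ^ n := by
        have := Nat.choose_mul_pow_mul_pow_le (rest D n) S
        rw [hn] at this
        simpa [mul_assoc] using this

/-- The term of Legendre's formula for `coeff D n` at `q = p ^ j` is at least one once
`rest D n < q ≤ n`: then it equals `m - ∑ d ∈ D, m / d` with `m = n / q > 0`. -/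
lemma ite_add_sum_div_add_rest_div_le (hD : ∑ d ∈ D, (d : ℝ)⁻¹ < 1) {n q : ℕ} (hq : 0 < q)
    (hqn : q ≤ n) :
    (if rest D n < q then 1 else 0) + (∑ d ∈ D, n / d / q + rest D n / q) ≤ n / q := by
  split_ifs with hr
  · have hswap : ∑ d ∈ D, n / d / q = ∑ d ∈ D, n / q / d :=
      sum_congr rfl fun d _ ↦ by rw [Nat.div_div_eq_div_mul, Nat.div_div_eq_div_mul, mul_comm]
    have := sum_div_lt_self hD (Nat.div_pos hqn hq)
    rw [Nat.div_eq_of_lt hr, hswap]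
    omega
  · calc 0 + (∑ d ∈ D, n / d / q + rest D n / q)
        ≤ (∑ d ∈ D, n / d) / q + rest D n / q := by
          rw [zero_add]; gcongr; exact sum_div_le_div_sum D (n / ·) q
      _ ≤ (∑ d ∈ D, n / d + rest D n) / q := Nat.div_add_div_le_add_div
      _ = n / q := by rw [sum_div_add_rest hD n]

lemma log_sub_log_rest_le_factorization_coeff (hD : ∑ d ∈ D, (d : ℝ)⁻¹ < 1) {p : ℕ}
    (hp : p.Prime) (n : ℕ) :
    Nat.log p n - Nat.log p (rest D n) ≤ (coeff D n).factorization p := by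
  set r := rest D n
  set b := Nat.log p n + 1
  have legendre : ∀ k ≤ n, (k !).factorization p = ∑ j ∈ Ico 1 b, k / p ^ j := fun k hk ↦
    Nat.factorization_factorial hp (Nat.lt_succ_of_le (Nat.log_mono_right hk))
  have hfact : (coeff D n).factorization p + (∑ d ∈ D, ((n / d)!).factorization p +
      (r !).factorization p) = (n !).factorization p := by
    rw [← coeff_mul_prod_factorial hD n, Nat.factorization_mul (coeff_pos n).ne' (by positivity),
      Nat.factorization_mul (by positivity) (by positivity),
      Nat.factorization_prod fun d _ ↦ by positivity]
    simp [r]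
  rw [legendre n le_rfl, legendre r (rest_le n),
    sum_congr rfl fun d _ ↦ legendre (n / d) (Nat.div_le_self n d), sum_comm] at hfact
  have hcarry : ∑ j ∈ Ico 1 b, ((if r < p ^ j then 1 else 0) +
      (∑ d ∈ D, n / d / p ^ j + r / p ^ j)) ≤ ∑ j ∈ Ico 1 b, n / p ^ j :=
    sum_le_sum fun j hj ↦ by
      obtain ⟨hj1, hjb⟩ := mem_Ico.1 hj
      have hn : n ≠ 0 := by rintro rfl; simp only [b, Nat.log_zero_right] at hjb; omega
      exact ite_add_sum_div_add_rest_div_le hD (pow_pos hp.pos j)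
        (Nat.pow_le_of_le_log hn (by omega))
  rw [sum_add_distrib, sum_add_distrib] at hcarry
  have hcount : Nat.log p n - Nat.log p r ≤ ∑ j ∈ Ico 1 b, (if r < p ^ j then 1 else 0) := calc
    Nat.log p n - Nat.log p r = ∑ j ∈ Ico (Nat.log p r + 1) b, (if r < p ^ j then 1 else 0) := by
      rw [sum_congr rfl fun j hj ↦ if_pos (Nat.lt_pow_of_log_lt hp.one_lt (mem_Ico.1 hj).1)]
      simp [b]
    _ ≤ _ := sum_le_sum_of_subset (Ico_subset_Ico_left (by omega))
  omega

theorem lcmUpto_dvd_coeff_mul_lcmUpto_rest (hD : ∑ d ∈ D, (d : ℝ)⁻¹ < 1) (n : ℕ) :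
    n.lcmUpto ∣ coeff D n * (rest D n).lcmUpto := by
  have hne := Nat.lcmUpto_ne_zero (rest D n)
  rw [← Nat.factorization_le_iff_dvd (Nat.lcmUpto_ne_zero n) (mul_ne_zero (coeff_pos n).ne' hne)]
  intro p
  by_cases hp : p.Prime
  · rw [Nat.factorization_mul (coeff_pos n).ne' hne, Finsupp.add_apply,
      Nat.factorization_lcmUpto _ hp, Nat.factorization_lcmUpto _ hp]
    have := log_sub_log_rest_le_factorization_coeff hD hp n
    omega
  · simp [Nat.factorization_eq_zero_of_not_prime _ hp]

lemma log_coeff_le (hD : ∑ d ∈ D, (d : ℝ)⁻¹ < 1) {n : ℕ} (hn : 0 < n) :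
    log (coeff D n) ≤
      n * (∑ d ∈ D, negMulLog ((n / d : ℕ) / n) + negMulLog (rest D n / n)) := by
  have hN : (n : ℝ) ≠ 0 := Nat.cast_ne_zero.2 hn.ne'
  have hsum : ∑ d ∈ D, ((n / d : ℕ) : ℝ) + rest D n = n := by
    exact_mod_cast sum_div_add_rest hD n
  have hpow : ∀ k : ℕ, 0 < (k : ℝ) ^ k := fun k ↦ by
    rcases k.eq_zero_or_pos with rfl | hk
    · simp
    · positivity
  have hprod : 0 < ∏ d ∈ D, ((n / d : ℕ) : ℝ) ^ (n / d) := prod_pos fun d _ ↦ hpow _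
  have hbound : (coeff D n : ℝ) * ((∏ d ∈ D, ((n / d : ℕ) : ℝ) ^ (n / d)) *
      (rest D n : ℝ) ^ rest D n) ≤ (n : ℝ) ^ n := by
    exact_mod_cast coeff_mul_prod_pow_le hD n
  replace hbound := log_le_log
    (mul_pos (Nat.cast_pos.2 (coeff_pos n)) (mul_pos hprod (hpow _))) hbound
  rw [log_mul (Nat.cast_pos.2 (coeff_pos n)).ne' (mul_pos hprod (hpow _)).ne',
    log_mul hprod.ne' (hpow _).ne', log_prod fun d _ ↦ (hpow _).ne'] at hbound
  simp only [log_pow] at hbound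
  rw [mul_add, mul_sum, mul_negMulLog_div hN, sum_congr rfl fun d _ ↦ mul_negMulLog_div hN _,
    sum_sub_distrib, ← sum_mul]
  linear_combination hbound - log n * hsum

/-- `n * exponent D n` bounds `log (coeff D n * lcmUpto (rest D n))`. -/
noncomputable def exponent (D : Finset ℕ) (n : ℕ) : ℝ :=
  ∑ d ∈ D, negMulLog ((n / d : ℕ) / n) + negMulLog (rest D n / n) +
    (log 4 + 4) * (rest D n / n)

lemma log_lcmUpto_le_mul_exponent (hD : ∑ d ∈ D, (d : ℝ)⁻¹ < 1) {n : ℕ} (hn : 0 < n) :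
    log n.lcmUpto ≤ n * exponent D n := by
  have hdvd := Nat.le_of_dvd (Nat.mul_pos (coeff_pos n) (Nat.lcmUpto_pos _))
    (lcmUpto_dvd_coeff_mul_lcmUpto_rest hD n)
  calc log n.lcmUpto ≤ log (coeff D n * (rest D n).lcmUpto) :=
        log_le_log (Nat.cast_pos.2 (Nat.lcmUpto_pos n)) (by exact_mod_cast hdvd)
    _ = log (coeff D n) + log (rest D n).lcmUpto :=
        log_mul (Nat.cast_ne_zero.2 (coeff_pos n).ne')
          (Nat.cast_ne_zero.2 (Nat.lcmUpto_ne_zero _))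
    _ ≤ n * (∑ d ∈ D, negMulLog ((n / d : ℕ) / n) + negMulLog (rest D n / n)) +
          (log 4 + 4) * rest D n :=
        add_le_add (log_coeff_le hD hn) (log_lcmUpto_le _)
    _ = n * exponent D n := by
        rw [exponent]
        field_simp [Nat.cast_ne_zero.2 hn.ne']

lemma tendsto_rest_div (hD : ∑ d ∈ D, (d : ℝ)⁻¹ < 1) :
    Tendsto (fun n : ℕ ↦ (rest D n : ℝ) / n) atTop (𝓝 (1 - ∑ d ∈ D, (d : ℝ)⁻¹)) := by
  refine (tendsto_const_nhds.sub (tendsto_finsetSum D fun d _ ↦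
    tendsto_natDiv_div_atTop d)).congr' ?_
  filter_upwards [eventually_gt_atTop 0] with n hn
  have hsum : ∑ d ∈ D, ((n / d : ℕ) : ℝ) + rest D n = n := by
    exact_mod_cast sum_div_add_rest hD n
  rw [← sum_div, eq_div_iff (Nat.cast_ne_zero.2 hn.ne'), sub_mul, one_mul,
    div_mul_cancel₀ _ (Nat.cast_ne_zero.2 hn.ne')]
  linarith

lemma tendsto_exponent (hD : ∑ d ∈ D, (d : ℝ)⁻¹ < 1) :
    Tendsto (exponent D) atTop (𝓝 (∑ d ∈ D, negMulLog (d : ℝ)⁻¹ +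
      negMulLog (1 - ∑ d ∈ D, (d : ℝ)⁻¹) + (log 4 + 4) * (1 - ∑ d ∈ D, (d : ℝ)⁻¹))) :=
  ((tendsto_finsetSum D fun d _ ↦
      (continuous_negMulLog.tendsto _).comp (tendsto_natDiv_div_atTop d)).add
    ((continuous_negMulLog.tendsto _).comp (tendsto_rest_div hD))).add
    ((tendsto_rest_div hD).const_mul _)

theorem eventually_lcmUpto_le_pow (hD : ∑ d ∈ D, (d : ℝ)⁻¹ < 1) {c : ℝ} (hc : 0 < c)
    (hlim : ∑ d ∈ D, negMulLog (d : ℝ)⁻¹ + negMulLog (1 - ∑ d ∈ D, (d : ℝ)⁻¹) +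
      (log 4 + 4) * (1 - ∑ d ∈ D, (d : ℝ)⁻¹) < log c) :
    ∀ᶠ n in atTop, (n.lcmUpto : ℝ) ≤ c ^ n := by
  filter_upwards [(tendsto_exponent hD).eventually (gt_mem_nhds hlim), eventually_gt_atTop 0]
    with n hexp hn
  rw [← log_le_log_iff (Nat.cast_pos.2 (Nat.lcmUpto_pos n)) (pow_pos hc n), log_pow]
  calc log n.lcmUpto ≤ n * exponent D n := log_lcmUpto_le_mul_exponent hD hn
    _ ≤ n * log c := by gcongr

end Hanson

/-- `2, 3, 7, 43` are the first terms of Sylvester's sequence. -/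
lemma sum_inv_sylvester : ∑ d ∈ ({2, 3, 7, 43} : Finset ℕ), (d : ℝ)⁻¹ = 1 - 1806⁻¹ := by
  norm_num

lemma sylvester_exponent_lt_log_three :
    ∑ d ∈ ({2, 3, 7, 43} : Finset ℕ), negMulLog (d : ℝ)⁻¹ +
      negMulLog (1 - ∑ d ∈ ({2, 3, 7, 43} : Finset ℕ), (d : ℝ)⁻¹) +
      (log 4 + 4) * (1 - ∑ d ∈ ({2, 3, 7, 43} : Finset ℕ), (d : ℝ)⁻¹) < log 3 := by
  have hexp : 4 < log 55 := by
    rw [lt_log_iff_exp_lt (by norm_num), show (4 : ℝ) = (4 : ℕ) by norm_num, ← exp_one_pow]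
    calc exp 1 ^ 4 < 2.7182818286 ^ 4 := by gcongr; exact exp_one_lt_d9
      _ < 55 := by norm_num
  -- `1806` times the claim, exponentiated, after `exp 4 < 55` and cancelling `3 ^ 602`
  have hnum : log ((2 : ℝ) ^ 905 * 7 ^ 258 * 43 ^ 42 * 1806 * 55) < log (3 ^ 1204) :=
    log_lt_log (by positivity) (by exact_mod_cast
      (by decide +kernel : 2 ^ 905 * 7 ^ 258 * 43 ^ 42 * 1806 * 55 < 3 ^ 1204))
  rw [log_mul (by positivity) (by positivity), log_mul (by positivity) (by positivity),
    log_mul (by positivity) (by positivity), log_mul (by positivity) (by positivity),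
    log_pow, log_pow, log_pow, log_pow] at hnum
  push_cast at hnum
  have hlog4 : log 4 = 2 * log 2 := by
    rw [show (4 : ℝ) = 2 ^ 2 by norm_num, log_pow]; norm_num
  rw [sum_inv_sylvester]
  simp only [sub_sub_cancel, negMulLog, log_inv]
  norm_num
  linarith

theorem lcm_le_three_pow_eventually :
    ∃ N : ℕ, ∀ n ≥ N, (Finset.Icc 1 n).lcm id ≤ 3 ^ n := by
  have hD : ∑ d ∈ ({2, 3, 7, 43} : Finset ℕ), (d : ℝ)⁻¹ < 1 := by
    rw [sum_inv_sylvester]; norm_num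
  obtain ⟨N, hN⟩ := eventually_atTop.1 <|
    Hanson.eventually_lcmUpto_le_pow hD three_pos sylvester_exponent_lt_log_three
  exact ⟨N, fun n hn ↦ by exact_mod_cast hN n hn⟩
end
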